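/- arXiv:1509.07999 — 2 statements merged into one kernel-verified Lean document; each statement's English description precedes it below -/
import Mathlib

section
/- Let n ≥ 2, 1 < p < ∞, and -n/p < β < n - n/p. Then the integral ∫_0^∞ ρ^{n/p} ( ∫_{S^{n-1}} |1 - ρ^β| / |ρe - θ|^n dS(θ) ) dρ/ρ is finite, where e ∈ S^{n-1} is any fixed unit vector. -/
open MeasureTheory Metric Set ENNReal

noncomputable def sphereM (n : ℕ) : Measure (sphere (0 : EuclideanSpace ℝ (Fin n)) 1) :=
  (volume : Measure (EuclideanSpace ℝ (Fin n))).toSphere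

/-- The `L^{p̃}(S^{n-1})` (extended) norm of an `ℝ≥0∞`-valued function on the unit sphere. -/
noncomputable def aNorm (n : ℕ) (pt : ℝ≥0∞) (u : sphere (0 : EuclideanSpace ℝ (Fin n)) 1 → ℝ≥0∞) : ℝ≥0∞ :=
  if pt = ∞ then essSup u (sphereM n)
  else (∫⁻ θ, (u θ) ^ pt.toReal ∂(sphereM n)) ^ (1 / pt.toReal)

/-- The mixed radial-angular norm `‖f‖_{L^p_{|x|} L^{p̃}_θ}` of an `ℝ≥0∞`-valued function. -/
noncomputable def mixedNormE (n : ℕ) (p : ℝ) (pt : ℝ≥0∞) (f : EuclideanSpace ℝ (Fin n) → ℝ≥0∞) : ℝ≥0∞ :=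
  (∫⁻ ρ in Ioi (0 : ℝ),
      (aNorm n pt (fun θ => f (ρ • (θ : EuclideanSpace ℝ (Fin n))))) ^ p
        * ENNReal.ofReal (ρ ^ ((n : ℝ) - 1))) ^ (1 / p)

/-- The mixed radial-angular norm of a complex-valued function. -/
noncomputable def mixedNorm (n : ℕ) (p : ℝ) (pt : ℝ≥0∞) (f : EuclideanSpace ℝ (Fin n) → ℂ) : ℝ≥0∞ :=
  mixedNormE n p pt (fun x => (‖f x‖₊ : ℝ≥0∞))

/-!
Writing `x = ρ θ` in polar coordinates and using `‖ρ θ - e‖ = ‖ρ e - θ‖` for unit vectors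
`θ, e`, the double integral becomes `∫ K` over `ℝⁿ`, where
`K x = ‖x‖ ^ a * |1 - ‖x‖ ^ β| / ‖x - e‖ ^ n` and `a = n / p - n`.
Near `0`, `K = O(‖x‖ ^ a + ‖x‖ ^ (a + β))`, integrable since `a, a + β > -n`;
near infinity, `K = O(‖x‖ ^ (a - n) + ‖x‖ ^ (a + β - n))`, integrable since `a, a + β < 0`.
On the annulus `1/2 ≤ ‖x‖ ≤ 2` the factor `|1 - ‖x‖ ^ β|` vanishes to first order on the unit
sphere, which cancels one power of `‖x - e‖`: there `K = O(‖x - e‖ ^ (1 - n))`, integrable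
near `e`.
-/

open Module (finrank)

theorem Real.rpow_mul_abs_one_sub_rpow_le {t : ℝ} (ht : 0 ≤ t) (a b : ℝ) :
    t ^ a * |1 - t ^ b| ≤ t ^ a + t ^ (a + b) :=
  calc t ^ a * |1 - t ^ b| ≤ t ^ a * (1 + t ^ b) := by
        gcongr
        simpa [abs_of_nonneg (Real.rpow_nonneg ht b)] using abs_sub (1 : ℝ) (t ^ b)
    _ ≤ t ^ a + t ^ (a + b) := by
        rw [mul_one_add]
        gcongr
        exact Real.le_rpow_add ht a b

theorem Real.exists_lipschitzOnWith_rpow_sub_rpow {l : ℝ} (hl : 0 < l) (u a b : ℝ) :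
    ∃ L, LipschitzOnWith L (fun t : ℝ ↦ t ^ a - t ^ b) (Icc l u) := by
  refine ContDiffOn.exists_lipschitzOnWith (fun t ht ↦ ?_) one_ne_zero (convex_Icc _ _)
    isCompact_Icc
  have ht₀ : t ≠ 0 := (hl.trans_le ht.1).ne'
  exact ((Real.contDiffAt_rpow_const_of_ne ht₀).sub
    (Real.contDiffAt_rpow_const_of_ne ht₀)).contDiffWithinAt

section AddHaar

variable {E : Type*} [NormedAddCommGroup E] [NormedSpace ℝ E] [FiniteDimensional ℝ E]
  [MeasurableSpace E] [BorelSpace E] (μ : Measure E) [μ.IsAddHaarMeasure]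

theorem lintegral_eq_lintegral_Ioi_toSphere [Nontrivial E] {g : E → ℝ≥0∞}
    (hg : Measurable g) :
    ∫⁻ x, g x ∂μ = ∫⁻ r in Ioi (0 : ℝ),
      (∫⁻ θ, g (r • (θ : E)) ∂μ.toSphere) *
        ENNReal.ofReal (r ^ (finrank ℝ E - 1)) := by
  calc ∫⁻ x, g x ∂μ = ∫⁻ x : ({0}ᶜ : Set E), g x ∂(μ.comap (↑)) := by
        rw [lintegral_subtype_comap (measurableSet_singleton _).compl, restrict_compl_singleton]
    _ = ∫⁻ y, g (y.2.1 • y.1.1)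
          ∂(μ.toSphere.prod (.volumeIoiPow (finrank ℝ E - 1))) := by
        rw [← μ.measurePreserving_homeomorphUnitSphereProd.lintegral_comp_emb
          (Homeomorph.measurableEmbedding _)]
        refine lintegral_congr fun x ↦ ?_
        simp [smul_inv_smul₀ (norm_ne_zero_iff.2 x.2)]
    _ = ∫⁻ r, ∫⁻ θ, g (r.1 • (θ : E)) ∂μ.toSphere
          ∂(.volumeIoiPow (finrank ℝ E - 1)) :=
        lintegral_prod_symm' _ (by fun_prop)
    _ = _ := by
        rw [Measure.volumeIoiPow, lintegral_withDensity_eq_lintegral_mul _ (by fun_prop)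
          (Measurable.lintegral_prod_right' (f := fun z : Ioi (0 : ℝ) × sphere (0 : E) 1 ↦
            g (z.1.1 • z.2.1)) (by fun_prop)),
          ← lintegral_subtype_comap measurableSet_Ioi]
        simp [mul_comm]

theorem integrableOn_ball_norm_sub_rpow [Nontrivial E] {s : ℝ} (hs : -(finrank ℝ E : ℝ) < s)
    (c : E) (r : ℝ) :
    IntegrableOn (fun x ↦ ‖x - c‖ ^ s) (ball c r) μ := by
  have h0 : IntegrableOn (fun x : E ↦ ‖x‖ ^ s) (ball 0 r) μ :=
    integrableOn_ball_of_norm_le_rpow (C := 1) (α := -s) Module.finrank_pos (by linarith)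
      (.of_forall fun x ↦ by simp [abs_of_nonneg (Real.rpow_nonneg (norm_nonneg x) s)])
      (measurable_norm.pow_const s).aestronglyMeasurable
  rw [← (measurePreserving_sub_right μ c).integrableOn_comp_preimage
    (measurableEmbedding_subRight c)] at h0
  have hpre : (fun x ↦ x - c) ⁻¹' ball 0 r = ball c r := by ext x; simp [dist_eq_norm]
  rwa [hpre] at h0

theorem integrableOn_compl_ball_norm_rpow {s : ℝ} (hs : s < -(finrank ℝ E : ℝ)) :
    IntegrableOn (fun x ↦ ‖x‖ ^ s) (ball (0 : E) 1)ᶜ μ := by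
  have hs0 : s ≤ 0 := by linarith [(finrank ℝ E).cast_nonneg (α := ℝ)]
  refine (((integrable_one_add_norm (μ := μ) (r := -s) (by linarith)).const_mul
    (2 ^ (-s))).integrableOn).mono' (measurable_norm.pow_const s).aestronglyMeasurable ?_
  refine ae_restrict_of_forall_mem measurableSet_ball.compl fun x hx ↦ ?_
  have hx1 : 1 ≤ ‖x‖ := by simpa using hx
  rw [Real.norm_of_nonneg (by positivity), neg_neg]
  calc ‖x‖ ^ s = 2 ^ (-s) * (2 * ‖x‖) ^ s := by
        rw [Real.mul_rpow zero_le_two (by positivity), ← mul_assoc, ← Real.rpow_add two_pos]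
        simp
    _ ≤ 2 ^ (-s) * (1 + ‖x‖) ^ s :=
        mul_le_mul_of_nonneg_left
          (Real.rpow_le_rpow_of_nonpos (by positivity) (by linarith) hs0) (by positivity)

end AddHaar

section Kernel

variable {E : Type*} [NormedAddCommGroup E] [NormedSpace ℝ E]

noncomputable def kernel (a β : ℝ) (e x : E) : ℝ :=
  ‖x‖ ^ a * (|1 - ‖x‖ ^ β| / ‖x - e‖ ^ finrank ℝ E)

variable {a β : ℝ} {e x : E}

theorem kernel_nonneg : 0 ≤ kernel a β e x := by unfold kernel; positivity

theorem measurable_kernel [MeasurableSpace E] [BorelSpace E] :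
    Measurable (kernel a β e) := by unfold kernel; fun_prop

theorem kernel_le_div :
    kernel a β e x ≤ (‖x‖ ^ a + ‖x‖ ^ (a + β)) / ‖x - e‖ ^ finrank ℝ E := by
  rw [kernel, ← mul_div_assoc]
  gcongr
  exact Real.rpow_mul_abs_one_sub_rpow_le (norm_nonneg x) a β

theorem kernel_le_of_norm_lt_half (he : ‖e‖ = 1) (hx : ‖x‖ < 1 / 2) :
    kernel a β e x ≤ 2 ^ finrank ℝ E * (‖x‖ ^ a + ‖x‖ ^ (a + β)) := by
  have hxe : 1 / 2 ≤ ‖x - e‖ := by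
    have := norm_sub_norm_le e x
    rw [norm_sub_rev] at this
    linarith
  calc kernel a β e x
      ≤ (‖x‖ ^ a + ‖x‖ ^ (a + β)) / ‖x - e‖ ^ finrank ℝ E := kernel_le_div
    _ ≤ (‖x‖ ^ a + ‖x‖ ^ (a + β)) / (1 / 2) ^ finrank ℝ E := by gcongr
    _ = _ := by rw [one_div, inv_pow, div_inv_eq_mul, mul_comm]

theorem kernel_le_of_two_le_norm (he : ‖e‖ = 1) (hx : 2 ≤ ‖x‖) :
    kernel a β e x ≤
      2 ^ finrank ℝ E * (‖x‖ ^ (a - finrank ℝ E) + ‖x‖ ^ (a + β - finrank ℝ E)) := by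
  have hx0 : 0 < ‖x‖ := by linarith
  have hxe : ‖x‖ / 2 ≤ ‖x - e‖ := by
    have := norm_sub_norm_le x e
    linarith
  calc kernel a β e x
      ≤ (‖x‖ ^ a + ‖x‖ ^ (a + β)) / ‖x - e‖ ^ finrank ℝ E := kernel_le_div
    _ ≤ (‖x‖ ^ a + ‖x‖ ^ (a + β)) / (‖x‖ / 2) ^ finrank ℝ E := by gcongr
    _ = _ := by
        rw [Real.rpow_sub_natCast hx0.ne', Real.rpow_sub_natCast hx0.ne', div_pow]
        field_simp

theorem exists_kernel_le_on_annulus (he : ‖e‖ = 1) :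
    ∃ C, ∀ x : E, 1 / 2 ≤ ‖x‖ → ‖x‖ ≤ 2 →
      kernel a β e x ≤ C * ‖x - e‖ ^ (1 - (finrank ℝ E : ℝ)) := by
  obtain ⟨L, hL⟩ :=
    Real.exists_lipschitzOnWith_rpow_sub_rpow (by norm_num : (0 : ℝ) < 1 / 2) 2 a (a + β)
  refine ⟨L, fun x hx₁ hx₂ ↦ ?_⟩
  rcases eq_or_ne x e with rfl | hxe
  · simp only [kernel, he, Real.one_rpow, sub_self, abs_zero, zero_div, mul_zero]
    positivity
  have hx0 : 0 < ‖x‖ := by linarith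
  have hxe0 : 0 < ‖x - e‖ := norm_pos_iff.2 (sub_ne_zero.2 hxe)
  calc kernel a β e x = |‖x‖ ^ a - ‖x‖ ^ (a + β)| / ‖x - e‖ ^ finrank ℝ E := by
        rw [kernel, Real.rpow_add hx0, ← mul_one_sub, abs_mul,
          abs_of_nonneg (Real.rpow_nonneg hx0.le a), mul_div_assoc]
    _ ≤ L * ‖x - e‖ / ‖x - e‖ ^ finrank ℝ E := by
        gcongr
        have hlip := hL.dist_le_mul ‖x‖ ⟨hx₁, hx₂⟩ 1 (by norm_num)
        rw [Real.dist_eq, Real.dist_eq, Real.one_rpow, Real.one_rpow, sub_self, sub_zero] at hlip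
        refine hlip.trans ?_
        gcongr
        simpa [he] using abs_norm_sub_norm_le x e
    _ = L * ‖x - e‖ ^ (1 - (finrank ℝ E : ℝ)) := by
        rw [Real.rpow_sub_natCast hxe0.ne', Real.rpow_one, mul_div_assoc]

theorem integrable_kernel [MeasurableSpace E] [BorelSpace E] [FiniteDimensional ℝ E]
    [Nontrivial E] (μ : Measure E) [μ.IsAddHaarMeasure]
    (ha : -(finrank ℝ E : ℝ) < a) (haβ : -(finrank ℝ E : ℝ) < a + β)
    (ha₀ : a < 0) (haβ₀ : a + β < 0) (he : ‖e‖ = 1) :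
    Integrable (kernel a β e) μ := by
  have dominated {s : Set E} {g : E → ℝ} (hs : MeasurableSet s) (hg : IntegrableOn g s μ)
      (hle : ∀ x ∈ s, kernel a β e x ≤ g x) : IntegrableOn (kernel a β e) s μ :=
    hg.mono' measurable_kernel.aestronglyMeasurable.restrict <| ae_restrict_of_forall_mem hs
      fun x hx ↦ (Real.norm_of_nonneg kernel_nonneg).trans_le (hle x hx)
  have hnear : IntegrableOn (kernel a β e) (ball 0 (1 / 2)) μ :=
    dominated measurableSet_ball (((integrableOn_ball_norm_sub_rpow μ ha 0 _).add
      (integrableOn_ball_norm_sub_rpow μ haβ 0 _)).const_mul (2 ^ finrank ℝ E)) fun x hx ↦ by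
        simpa using kernel_le_of_norm_lt_half he (mem_ball_zero_iff.1 hx)
  have hmid : IntegrableOn (kernel a β e) ((ball 0 (1 / 2))ᶜ ∩ closedBall 0 2) μ := by
    obtain ⟨C, hC⟩ := exists_kernel_le_on_annulus (a := a) (β := β) he
    refine dominated (measurableSet_ball.compl.inter measurableSet_closedBall)
      (((integrableOn_ball_norm_sub_rpow μ (s := 1 - finrank ℝ E) (by linarith) e 4).mono_set
        fun x hx ↦ ?_).const_mul C)
      fun x hx ↦ ?_
    · rw [mem_ball, dist_eq_norm]
      linarith [norm_sub_le x e, mem_closedBall_zero_iff.1 hx.2]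
    · exact hC x (by simpa using hx.1) (mem_closedBall_zero_iff.1 hx.2)
  have hfar : IntegrableOn (kernel a β e) (ball 0 2)ᶜ μ :=
    dominated measurableSet_ball.compl (IntegrableOn.mono_set
      (((integrableOn_compl_ball_norm_rpow μ (s := a - finrank ℝ E) (by linarith)).add
        (integrableOn_compl_ball_norm_rpow μ (s := a + β - finrank ℝ E) (by linarith))).const_mul
          (2 ^ finrank ℝ E))
      (compl_subset_compl.2 (ball_subset_ball one_le_two))) fun x hx ↦
        kernel_le_of_two_le_norm he (by simpa using hx)
  refine integrableOn_univ.1 (((hnear.union hmid).union hfar).mono_set fun x _ ↦ ?_)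
  by_cases h₁ : ‖x‖ < 1 / 2
  · exact .inl (.inl (mem_ball_zero_iff.2 h₁))
  by_cases h₂ : ‖x‖ ≤ 2
  · exact .inl (.inr ⟨by simpa using h₁, mem_closedBall_zero_iff.2 h₂⟩)
  · exact .inr (by simpa using (not_le.1 h₂).le)

end Kernel

section InnerProductSpace

variable {E : Type*} [NormedAddCommGroup E] [InnerProductSpace ℝ E]

theorem norm_smul_sub_comm {u v : E} (hu : ‖u‖ = 1) (hv : ‖v‖ = 1) (r : ℝ) :
    ‖r • u - v‖ = ‖r • v - u‖ := by
  rw [← sq_eq_sq₀ (norm_nonneg _) (norm_nonneg _), norm_sub_sq_real, norm_sub_sq_real,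
    norm_smul, norm_smul, hu, hv, real_inner_smul_left, real_inner_smul_left, real_inner_comm]

theorem kernel_smul_of_norm_eq_one {a β r : ℝ} (hr : 0 ≤ r) {e θ : E} (he : ‖e‖ = 1)
    (hθ : ‖θ‖ = 1) :
    kernel a β e (r • θ) = r ^ a * (|1 - r ^ β| / ‖r • e - θ‖ ^ finrank ℝ E) := by
  rw [kernel, norm_smul, hθ, Real.norm_of_nonneg hr, mul_one, norm_smul_sub_comm hθ he]

variable [FiniteDimensional ℝ E] [MeasurableSpace E] [BorelSpace E] [Nontrivial E]
  (μ : Measure E) [μ.IsAddHaarMeasure]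

theorem lintegral_kernel_eq {e : E} (he : ‖e‖ = 1) (c β : ℝ) :
    ∫⁻ x, ENNReal.ofReal (kernel (c - finrank ℝ E) β e x) ∂μ =
      ∫⁻ ρ in Ioi (0 : ℝ), ENNReal.ofReal (ρ ^ c) *
        (∫⁻ θ, ENNReal.ofReal (|1 - ρ ^ β| / ‖ρ • e - (θ : E)‖ ^ finrank ℝ E)
          ∂μ.toSphere) *
        ENNReal.ofReal ρ⁻¹ := by
  rw [lintegral_eq_lintegral_Ioi_toSphere μ measurable_kernel.ennreal_ofReal]
  refine setLIntegral_congr_fun measurableSet_Ioi fun ρ (hρ : 0 < ρ) ↦ ?_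
  have hθ (θ : sphere (0 : E) 1) :
      ENNReal.ofReal (kernel (c - finrank ℝ E) β e (ρ • (θ : E))) =
        ENNReal.ofReal (ρ ^ (c - finrank ℝ E)) *
          ENNReal.ofReal (|1 - ρ ^ β| / ‖ρ • e - (θ : E)‖ ^ finrank ℝ E) := by
    rw [kernel_smul_of_norm_eq_one hρ.le he (norm_eq_of_mem_sphere θ),
      ENNReal.ofReal_mul (by positivity)]
  have hpow : ρ ^ c * ρ⁻¹ = ρ ^ (c - finrank ℝ E) * ρ ^ (finrank ℝ E - 1) := by
    rw [← Real.rpow_natCast, Nat.cast_sub Module.finrank_pos, ← Real.rpow_add hρ,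
      ← Real.rpow_neg_one, ← Real.rpow_add hρ]
    congr 1
    ring
  rw [lintegral_congr hθ, lintegral_const_mul' _ _ ENNReal.ofReal_ne_top, mul_right_comm,
    ← ENNReal.ofReal_mul (by positivity), ← hpow, ENNReal.ofReal_mul (by positivity)]
  ring

end InnerProductSpace

/-- The kernel integral `∫_0^∞ ρ^{n/p} ∫_{S^{n-1}} |1-ρ^β| / |ρe-θ|^n dS(θ) dρ/ρ`
is finite for `1 < p < ∞` and `-n/p < β < n - n/p`. -/
theorem kernel_integral_finite
    (n : ℕ) (hn : 2 ≤ n) (p β : ℝ) (hp : 1 < p)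
    (hβ₁ : -((n : ℝ) / p) < β) (hβ₂ : β < (n : ℝ) - (n : ℝ) / p)
    (e : EuclideanSpace ℝ (Fin n)) (he : ‖e‖ = 1) :
    ∫⁻ ρ in Ioi (0 : ℝ),
        ENNReal.ofReal (ρ ^ ((n : ℝ) / p)) *
          (∫⁻ θ, ENNReal.ofReal
              (|1 - ρ ^ β| / ‖ρ • e - (θ : EuclideanSpace ℝ (Fin n))‖ ^ n) ∂(sphereM n)) *
          ENNReal.ofReal ρ⁻¹ < ∞ := by
  have hdim : finrank ℝ (EuclideanSpace ℝ (Fin n)) = n := finrank_euclideanSpace_fin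
  have : Nontrivial (EuclideanSpace ℝ (Fin n)) :=
    Module.nontrivial_of_finrank_pos (R := ℝ) (by omega)
  have hpolar := lintegral_kernel_eq volume he (n / p) β
  rw [hdim] at hpolar
  rw [sphereM, ← hpolar]
  have hn₀ : (0 : ℝ) < n := by positivity
  have hnp₀ : 0 < (n : ℝ) / p := div_pos hn₀ (by linarith)
  have hnp : (n : ℝ) / p < n := div_lt_self hn₀ hp
  exact (integrable_kernel volume (by rw [hdim]; linarith) (by rw [hdim]; linarith)
    (by linarith) (by linarith) he).lintegral_lt_top
end

section
/- Let n ≥ 2 and let e ∈ S^{n-1} be a fixed unit vector. Then there exist constants c, C > 0 depending only on n such that for all ρ ∈ [1/2, 2] with ρ ≠ 1, c/|1-ρ| ≤ ∫_{S^{n-1}} |ρe - θ|^{-n} dS(θ) ≤ C/|1-ρ|. -/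
open MeasureTheory Metric Set ENNReal

/-!
Put `δ = |1 - ρ|`, the distance from `ρ • e` to the sphere, attained at `e`. Both bounds rest on
the cap estimate `σ(B(x, r)) ≍ r ^ (n - 1)` for the surface measure `σ` of a cap of radius `r`.
Since `σ A = n · vol((0, 1) • A)` and `vol((0, a) • A) = a ^ n · vol((0, 1) • A)`, the part of
the cone over `B(x, r)` with radial coordinate in `[1 - s, 1)` has volume
`(1 - (1 - s) ^ n) · σ(B(x, r)) / n ≍ s · σ(B(x, r))`. For `s = r` this part lies in the ball of
radius `2r` about `x`; for `s = r/2` it contains the ball of radius `r/4` about `(1 - r/4) x`.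

Lower bound: the kernel is at least `(2δ) ^ (-n)` on the cap of radius `δ` about `e`.
Upper bound: writing `|ρe - θ| ^ (-n) = ∫₀^{1/|ρe - θ|} n s ^ (n - 1) ds`, the layer-cake formula
turns the integral into `∫₀^{1/δ} n s ^ (n - 1) σ{θ : |ρe - θ| < 1/s} ds`, whose integrand is
bounded because that set lies in the cap of radius `2/s` about `e`.
-/

open Module
open scoped Pointwise

namespace MeasureTheory

variable {X : Type*} [MeasurableSpace X] (ν : Measure X) {g : X → ℝ} {δ K : ℝ}

theorem lintegral_ofReal_inv_pow_le_of_measure_lt_le (hg : Measurable g) (hδ : 0 < δ)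
    (hgδ : ∀ x, δ ≤ g x) (m : ℕ)
    (hν : ∀ r, δ < r → ν {x | g x < r} ≤ ENNReal.ofReal (K * r ^ m)) :
    ∫⁻ x, ENNReal.ofReal ((g x ^ (m + 1))⁻¹) ∂ν ≤ ENNReal.ofReal (K * (m + 1) / δ) := by
  have hg0 : ∀ x, 0 < g x := fun x => hδ.trans_le (hgδ x)
  have hprimitive : ∀ x, (g x ^ (m + 1))⁻¹ = ∫ t in (0 : ℝ)..(g x)⁻¹, (m + 1 : ℝ) * t ^ m := by
    intro x
    rw [intervalIntegral.integral_const_mul, integral_pow, inv_pow]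
    simp [field]
  have hlayer : ∫⁻ x, ENNReal.ofReal ((g x ^ (m + 1))⁻¹) ∂ν =
      ∫⁻ t in Ioi 0, ν {x | t < (g x)⁻¹} * ENNReal.ofReal ((m + 1) * t ^ m) := by
    have hcont : Continuous fun t : ℝ => (m + 1 : ℝ) * t ^ m := by fun_prop
    simp_rw [hprimitive]
    exact lintegral_comp_eq_lintegral_meas_lt_mul ν
      (ae_of_all _ fun x => (inv_pos.2 (hg0 x)).le) hg.inv.aemeasurable
      (fun t _ => hcont.intervalIntegrable _ _)
      ((ae_restrict_iff' measurableSet_Ioi).2 (ae_of_all _ fun t (ht : 0 < t) => by positivity))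
  have hlevel : ∀ t ∈ Ioi (0 : ℝ), ν {x | t < (g x)⁻¹} * ENNReal.ofReal ((m + 1) * t ^ m) ≤
      (Iio δ⁻¹).indicator (fun _ => ENNReal.ofReal (K * (m + 1))) t := by
    intro t (ht : 0 < t)
    by_cases htδ : t < δ⁻¹
    · have hset : {x | t < (g x)⁻¹} = {x | g x < t⁻¹} := by
        ext x; exact lt_inv_comm₀ ht (hg0 x)
      rw [indicator_of_mem (show t ∈ Iio δ⁻¹ from htδ), hset]
      calc ν {x | g x < t⁻¹} * ENNReal.ofReal ((m + 1) * t ^ m)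
          ≤ ENNReal.ofReal (K * t⁻¹ ^ m) * ENNReal.ofReal ((m + 1) * t ^ m) :=
            mul_le_mul_left (hν _ ((lt_inv_comm₀ ht hδ).1 htδ)) _
        _ = ENNReal.ofReal (K * (m + 1)) := by
            rw [← ENNReal.ofReal_mul' (by positivity), inv_pow]
            congr 1
            field_simp
    · have hempty : {x | t < (g x)⁻¹} = ∅ :=
        eq_empty_of_forall_notMem fun x (hx : t < (g x)⁻¹) =>
          htδ (hx.trans_le (inv_anti₀ hδ (hgδ x)))
      simp [hempty, show t ∉ Iio δ⁻¹ from htδ]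
  calc ∫⁻ x, ENNReal.ofReal ((g x ^ (m + 1))⁻¹) ∂ν
      ≤ ∫⁻ t in Ioi 0, (Iio δ⁻¹).indicator (fun _ => ENNReal.ofReal (K * (m + 1))) t := by
        rw [hlayer]; exact setLIntegral_mono' measurableSet_Ioi hlevel
    _ = ENNReal.ofReal (K * (m + 1) / δ) := by
        rw [lintegral_indicator_const measurableSet_Iio,
          Measure.restrict_apply measurableSet_Iio, Iio_inter_Ioi, Real.volume_Ioo, sub_zero,
          ← ENNReal.ofReal_mul' (by positivity), div_eq_mul_inv]

theorem integral_inv_pow_le_of_measure_lt_le (hg : Measurable g) (hδ : 0 < δ) (hK : 0 ≤ K)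
    (hgδ : ∀ x, δ ≤ g x) (m : ℕ)
    (hν : ∀ r, δ < r → ν {x | g x < r} ≤ ENNReal.ofReal (K * r ^ m)) :
    ∫ x, (g x ^ (m + 1))⁻¹ ∂ν ≤ K * (m + 1) / δ := by
  rw [integral_eq_lintegral_of_nonneg_ae
    (ae_of_all _ fun x => (inv_pos.2 (pow_pos (hδ.trans_le (hgδ x)) _)).le) (by fun_prop)]
  exact ENNReal.toReal_le_of_le_ofReal (by positivity)
    (lintegral_ofReal_inv_pow_le_of_measure_lt_le ν hg hδ hgδ m hν)

end MeasureTheory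

theorem nontrivial_of_sphere_one {E : Type*} [SeminormedAddCommGroup E] (x : sphere (0 : E) 1) :
    Nontrivial E :=
  ⟨⟨x, 0, ne_of_apply_ne norm (by simp)⟩⟩

section Cones

variable {E : Type*} [NormedAddCommGroup E] [NormedSpace ℝ E]

theorem Ioo_zero_smul_image_sphere_subset_ball (s : Set (sphere (0 : E) 1)) (a : ℝ) :
    Ioo (0 : ℝ) a • ((↑) '' s : Set E) ⊆ ball 0 a := by
  rintro _ ⟨t, ht, _, ⟨θ, -, rfl⟩, rfl⟩
  simpa [norm_smul, abs_of_pos ht.1] using ht.2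

theorem Ioo_zero_one_smul_image_ball_subset_union (x : sphere (0 : E) 1) (r : ℝ) :
    Ioo (0 : ℝ) 1 • ((↑) '' ball x r : Set E) ⊆
      Ioo (0 : ℝ) (1 - r) • ((↑) '' ball x r) ∪ ball (x : E) (2 * r) := by
  rintro _ ⟨t, ht, _, ⟨θ, hθ, rfl⟩, rfl⟩
  by_cases htr : t < 1 - r
  · exact Or.inl (smul_mem_smul ⟨ht.1, htr⟩ (mem_image_of_mem _ hθ))
  · right
    have hθx : ‖(θ : E) - x‖ < r := by rwa [mem_ball, Subtype.dist_eq, dist_eq_norm] at hθ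
    calc dist (t • (θ : E)) x ≤ ‖t • (θ : E) - θ‖ + ‖(θ : E) - x‖ := by
          rw [dist_eq_norm]; exact norm_sub_le_norm_sub_add_norm_sub _ _ _
      _ = (1 - t) + ‖(θ : E) - x‖ := by
          rw [← neg_sub, norm_neg, ← one_smul ℝ (θ : E), smul_smul, mul_one, ← sub_smul,
            norm_smul, norm_eq_of_mem_sphere θ, mul_one, Real.norm_of_nonneg (by linarith [ht.2])]
      _ < 2 * r := by linarith

theorem ball_subset_Ioo_zero_one_smul_image_ball (x : sphere (0 : E) 1) {r : ℝ} (hr0 : 0 < r)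
    (hr2 : r ≤ 2) :
    ball ((1 - r / 4) • (x : E)) (r / 4) ⊆ Ioo (0 : ℝ) 1 • ((↑) '' ball x r) := by
  intro y hy
  have hx1 : ‖(x : E)‖ = 1 := norm_eq_of_mem_sphere x
  have hc : ‖(1 - r / 4) • (x : E)‖ = 1 - r / 4 := by
    rw [norm_smul, hx1, mul_one, Real.norm_of_nonneg (by linarith)]
  have hcx : ‖(1 - r / 4) • (x : E) - x‖ = r / 4 := by
    rw [sub_smul, one_smul, sub_sub_cancel_left, norm_neg, norm_smul, hx1, mul_one,
      Real.norm_of_nonneg (by linarith)]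
  rw [mem_ball, dist_eq_norm] at hy
  have hyx : ‖y - x‖ < r / 2 := by
    linarith [norm_sub_le_norm_sub_add_norm_sub y ((1 - r / 4) • (x : E)) x]
  have hy_lt : ‖y‖ < 1 := by
    linarith [norm_le_norm_add_norm_sub' y ((1 - r / 4) • (x : E))]
  have hy_gt : 1 - r / 2 < ‖y‖ := by
    linarith [norm_le_norm_add_norm_sub' ((1 - r / 4) • (x : E)) y,
      norm_sub_rev y ((1 - r / 4) • (x : E))]
  have hy0 : 0 < ‖y‖ := by linarith
  set u : E := ‖y‖⁻¹ • y
  have hu1 : ‖u‖ = 1 := by simp [u, norm_smul, hy0.ne']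
  have huy : ‖u - y‖ = 1 - ‖y‖ := by
    rw [show u - y = (1 - ‖y‖) • u by
        rw [sub_smul, one_smul, smul_smul, mul_inv_cancel₀ hy0.ne', one_smul],
      norm_smul, hu1, mul_one, Real.norm_of_nonneg (by linarith)]
  refine ⟨‖y‖, ⟨hy0, hy_lt⟩, u, ⟨⟨u, by simpa using hu1⟩, ?_, rfl⟩, by simp [u, hy0.ne']⟩
  rw [mem_ball, Subtype.dist_eq, dist_eq_norm]
  linarith [norm_sub_le_norm_sub_add_norm_sub u y x]

end Cones

namespace MeasureTheory.Measure

variable {E : Type*} [NormedAddCommGroup E] [NormedSpace ℝ E] [MeasurableSpace E]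
  (μ : Measure E)

theorem toSphere_real_apply' [BorelSpace E] {s : Set (sphere (0 : E) 1)}
    (hs : MeasurableSet s) :
    μ.toSphere.real s = finrank ℝ E * μ.real (Ioo (0 : ℝ) 1 • ((↑) '' s)) := by
  simp [measureReal_def, μ.toSphere_apply' hs]

theorem addHaar_Ioo_zero_smul_image_ne_top [FiniteDimensional ℝ E] [μ.IsAddHaarMeasure]
    (s : Set (sphere (0 : E) 1)) (a : ℝ) : μ (Ioo (0 : ℝ) a • ((↑) '' s)) ≠ ⊤ :=
  measure_ne_top_of_subset (Ioo_zero_smul_image_sphere_subset_ball s a) measure_ball_lt_top.ne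

variable [FiniteDimensional ℝ E] [BorelSpace E] [μ.IsAddHaarMeasure]

theorem addHaar_real_ball [Nontrivial E] (x : E) {r : ℝ} (hr : 0 ≤ r) :
    μ.real (ball x r) = r ^ finrank ℝ E * μ.real (ball 0 1) := by
  rw [measureReal_def, μ.addHaar_ball x hr, ENNReal.toReal_mul,
    ENNReal.toReal_ofReal (by positivity), measureReal_def]

theorem addHaar_real_Ioo_zero_smul [Nontrivial E] (s : Set E) {a : ℝ} (ha : 0 ≤ a) :
    μ.real (Ioo (0 : ℝ) a • s) = a ^ finrank ℝ E * μ.real (Ioo (0 : ℝ) 1 • s) := by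
  rcases ha.eq_or_lt with rfl | ha
  · simp [zero_pow finrank_pos.ne']
  have : Ioo (0 : ℝ) a = a • Ioo (0 : ℝ) 1 := by simp [LinearOrderedField.smul_Ioo ha]
  rw [this, smul_assoc, measureReal_def, μ.addHaar_smul_of_nonneg ha.le, ENNReal.toReal_mul,
    ENNReal.toReal_ofReal (by positivity), measureReal_def]

theorem toSphere_real_ball_le (x : sphere (0 : E) 1) {r : ℝ} (hr : 0 < r) :
    μ.toSphere.real (ball x r) ≤
      finrank ℝ E * 2 ^ finrank ℝ E * r ^ (finrank ℝ E - 1) * μ.real (ball 0 1) := by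
  have := nontrivial_of_sphere_one x
  set n := finrank ℝ E
  have hn : 1 ≤ n := finrank_pos
  rcases le_or_gt 1 r with hr1 | hr1
  · calc μ.toSphere.real (ball x r) ≤ μ.toSphere.real univ := measureReal_mono (subset_univ _)
      _ = n * 1 * 1 * μ.real (ball 0 1) := by simp [n]
      _ ≤ n * 2 ^ n * r ^ (n - 1) * μ.real (ball 0 1) := by
          gcongr
          · exact one_le_pow₀ one_le_two
          · exact one_le_pow₀ hr1
  set T : Set E := (↑) '' ball x r
  set C := μ.real (Ioo (0 : ℝ) 1 • T)
  have hsplit : C ≤ (1 - r) ^ n * C + (2 * r) ^ n * μ.real (ball 0 1) := by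
    calc C ≤ μ.real (Ioo (0 : ℝ) (1 - r) • T ∪ ball (x : E) (2 * r)) :=
          measureReal_mono (Ioo_zero_one_smul_image_ball_subset_union x r)
            (measure_union_ne_top (μ.addHaar_Ioo_zero_smul_image_ne_top _ _)
              measure_ball_lt_top.ne)
      _ ≤ μ.real (Ioo (0 : ℝ) (1 - r) • T) + μ.real (ball (x : E) (2 * r)) :=
          measureReal_union_le _ _
      _ = _ := by
          rw [μ.addHaar_real_Ioo_zero_smul _ (by linarith),
            μ.addHaar_real_ball _ (by positivity)]
  have hpow : (1 - r) ^ n ≤ 1 - r := pow_le_of_le_one (by linarith) (by linarith) (by omega)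
  have hrn : r ^ n = r * r ^ (n - 1) := by rw [← pow_succ', Nat.sub_add_cancel hn]
  have hC : r * C ≤ r * (2 ^ n * r ^ (n - 1) * μ.real (ball 0 1)) := by
    calc r * C ≤ (1 - (1 - r) ^ n) * C := by gcongr; linarith
      _ ≤ (2 * r) ^ n * μ.real (ball 0 1) := by linarith
      _ = r * (2 ^ n * r ^ (n - 1) * μ.real (ball 0 1)) := by
          rw [mul_pow, hrn]; ring
  calc μ.toSphere.real (ball x r) = n * C := μ.toSphere_real_apply' measurableSet_ball
    _ ≤ n * (2 ^ n * r ^ (n - 1) * μ.real (ball 0 1)) := by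
        gcongr; exact le_of_mul_le_mul_left hC hr
    _ = _ := by ring

theorem toSphere_real_ball_ge (x : sphere (0 : E) 1) {r : ℝ} (hr0 : 0 < r) (hr2 : r ≤ 2) :
    2 / 4 ^ finrank ℝ E * r ^ (finrank ℝ E - 1) * μ.real (ball 0 1) ≤
      μ.toSphere.real (ball x r) := by
  have := nontrivial_of_sphere_one x
  set n := finrank ℝ E
  have hn : 1 ≤ n := finrank_pos
  set T : Set E := (↑) '' ball x r
  set C := μ.real (Ioo (0 : ℝ) 1 • T)
  have hdisj :
      Disjoint (Ioo (0 : ℝ) (1 - r / 2) • T) (ball ((1 - r / 4) • (x : E)) (r / 4)) := by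
    refine (ball_disjoint_ball ?_).mono_left (Ioo_zero_smul_image_sphere_subset_ball _ _)
    rw [dist_zero_left, norm_smul, norm_eq_of_mem_sphere x, mul_one,
      Real.norm_of_nonneg (by linarith)]
    linarith
  have hsum : (1 - r / 2) ^ n * C + (r / 4) ^ n * μ.real (ball 0 1) ≤ C := by
    calc (1 - r / 2) ^ n * C + (r / 4) ^ n * μ.real (ball 0 1) =
          μ.real (Ioo (0 : ℝ) (1 - r / 2) • T ∪ ball ((1 - r / 4) • (x : E)) (r / 4)) := by
          rw [measureReal_union hdisj measurableSet_ball
            (μ.addHaar_Ioo_zero_smul_image_ne_top _ _) measure_ball_lt_top.ne,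
            μ.addHaar_real_Ioo_zero_smul _ (by linarith),
            μ.addHaar_real_ball ((1 - r / 4) • (x : E)) (by positivity)]
      _ ≤ C := measureReal_mono (union_subset
          (smul_subset_smul_right (Ioo_subset_Ioo_right (by linarith)))
          (ball_subset_Ioo_zero_one_smul_image_ball x hr0 hr2))
          (μ.addHaar_Ioo_zero_smul_image_ne_top _ _)
  have hbernoulli : 1 - n * (r / 2) ≤ (1 - r / 2) ^ n := by
    simpa [sub_eq_add_neg, mul_neg] using one_add_mul_le_pow (a := -(r / 2)) (by linarith) n
  have hrn : r ^ n = r * r ^ (n - 1) := by rw [← pow_succ', Nat.sub_add_cancel hn]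
  have hC : r * (2 / 4 ^ n * r ^ (n - 1) * μ.real (ball 0 1)) ≤ r * (n * C) := by
    have hC0 : 0 ≤ C := measureReal_nonneg
    calc r * (2 / 4 ^ n * r ^ (n - 1) * μ.real (ball 0 1))
        = 2 * ((r / 4) ^ n * μ.real (ball 0 1)) := by rw [div_pow, hrn]; ring
      _ ≤ 2 * ((1 - (1 - r / 2) ^ n) * C) := by linarith
      _ ≤ 2 * (n * (r / 2) * C) := by gcongr; linarith
      _ = r * (n * C) := by ring
  rw [μ.toSphere_real_apply' measurableSet_ball]
  exact le_of_mul_le_mul_left hC hr0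

end MeasureTheory.Measure

section SphereKernel

variable {E : Type*} [NormedAddCommGroup E] [NormedSpace ℝ E] [FiniteDimensional ℝ E]
  [MeasurableSpace E] [BorelSpace E] (μ : Measure E) [μ.IsAddHaarMeasure]

theorem integral_inv_norm_sub_pow_toSphere_ge (x : sphere (0 : E) 1) {y : E}
    (hxy0 : 0 < ‖y - x‖) (hxy2 : ‖y - x‖ ≤ 2)
    (hnearest : ∀ θ : sphere (0 : E) 1, ‖y - x‖ ≤ ‖y - θ‖) :
    2 / 8 ^ finrank ℝ E * μ.real (ball 0 1) / ‖y - x‖ ≤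
      ∫ θ, (‖y - θ‖ ^ finrank ℝ E)⁻¹ ∂μ.toSphere := by
  have := nontrivial_of_sphere_one x
  set n := finrank ℝ E
  set δ := ‖y - x‖
  have hn : 1 ≤ n := finrank_pos
  have hcont : Continuous fun θ : sphere (0 : E) 1 => (‖y - θ‖ ^ n)⁻¹ :=
    ((continuous_const.sub continuous_subtype_val).norm.pow n).inv₀
      fun θ => (pow_pos (hxy0.trans_le (hnearest θ)) n).ne'
  have hint : Integrable (fun θ : sphere (0 : E) 1 => (‖y - θ‖ ^ n)⁻¹) μ.toSphere := by
    refine Integrable.mono' (integrable_const (δ ^ n)⁻¹) hcont.aestronglyMeasurable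
      (ae_of_all _ fun θ => ?_)
    rw [Real.norm_of_nonneg (by positivity)]
    exact inv_anti₀ (by positivity) (pow_le_pow_left₀ hxy0.le (hnearest θ) n)
  have hcap : ∀ θ ∈ ball x δ, ((2 * δ) ^ n)⁻¹ ≤ (‖y - θ‖ ^ n)⁻¹ := by
    intro θ hθ
    rw [mem_ball, Subtype.dist_eq, dist_eq_norm] at hθ
    have : ‖y - θ‖ ≤ 2 * δ := by
      linarith [norm_sub_le_norm_sub_add_norm_sub y x θ, norm_sub_rev (θ : E) x]
    exact inv_anti₀ (pow_pos (hxy0.trans_le (hnearest θ)) n)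
      (pow_le_pow_left₀ (norm_nonneg _) this n)
  calc 2 / 8 ^ n * μ.real (ball 0 1) / δ
      = ((2 * δ) ^ n)⁻¹ * (2 / 4 ^ n * δ ^ (n - 1) * μ.real (ball 0 1)) := by
        rw [show (8 : ℝ) = 2 * 4 by norm_num, mul_pow, mul_pow,
          show δ ^ n = δ * δ ^ (n - 1) by rw [← pow_succ', Nat.sub_add_cancel hn]]
        field_simp
    _ ≤ ((2 * δ) ^ n)⁻¹ * μ.toSphere.real (ball x δ) := by
        gcongr; exact μ.toSphere_real_ball_ge x hxy0 hxy2
    _ ≤ ∫ θ in ball x δ, (‖y - θ‖ ^ n)⁻¹ ∂μ.toSphere :=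
        setIntegral_ge_of_const_le_real measurableSet_ball (measure_ne_top _ _) hcap
          hint.integrableOn
    _ ≤ ∫ θ, (‖y - θ‖ ^ n)⁻¹ ∂μ.toSphere :=
        setIntegral_le_integral hint (ae_of_all _ fun θ => by positivity)

theorem integral_inv_norm_sub_pow_toSphere_le (x : sphere (0 : E) 1) {y : E}
    (hxy0 : 0 < ‖y - x‖) (hnearest : ∀ θ : sphere (0 : E) 1, ‖y - x‖ ≤ ‖y - θ‖) :
    ∫ θ, (‖y - θ‖ ^ finrank ℝ E)⁻¹ ∂μ.toSphere ≤
      finrank ℝ E ^ 2 * 4 ^ finrank ℝ E * μ.real (ball 0 1) / ‖y - x‖ := by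
  have := nontrivial_of_sphere_one x
  obtain ⟨m, hm⟩ : ∃ m, finrank ℝ E = m + 1 := ⟨_, (Nat.sub_add_cancel finrank_pos).symm⟩
  set δ := ‖y - x‖
  have hsub : ∀ r, δ < r → {θ : sphere (0 : E) 1 | ‖y - θ‖ < r} ⊆ ball x (2 * r) := by
    intro r hr θ (hθ : ‖y - θ‖ < r)
    rw [mem_ball, Subtype.dist_eq, dist_eq_norm]
    linarith [norm_sub_le_norm_sub_add_norm_sub (θ : E) y x, norm_sub_rev (θ : E) y]
  have hlevel : ∀ r, δ < r → μ.toSphere {θ : sphere (0 : E) 1 | ‖y - θ‖ < r} ≤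
      ENNReal.ofReal ((m + 1) * 4 ^ (m + 1) * μ.real (ball 0 1) * r ^ m) := by
    intro r hr
    have hr0 : 0 < r := hxy0.trans hr
    rw [← ofReal_measureReal]
    refine ENNReal.ofReal_le_ofReal ((measureReal_mono (hsub r hr)).trans ?_)
    refine (μ.toSphere_real_ball_le x (by positivity)).trans ?_
    rw [hm, Nat.add_sub_cancel]
    have hpow : (2 : ℝ) ^ (m + 1) * 2 ^ m ≤ 4 ^ (m + 1) := by
      calc (2 : ℝ) ^ (m + 1) * 2 ^ m ≤ 2 ^ (m + 1) * 2 ^ (m + 1) := by gcongr <;> norm_num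
        _ = 4 ^ (m + 1) := by rw [← mul_pow]; norm_num
    calc ((m + 1 : ℕ) : ℝ) * 2 ^ (m + 1) * (2 * r) ^ m * μ.real (ball 0 1)
        = (m + 1) * (2 ^ (m + 1) * 2 ^ m) * μ.real (ball 0 1) * r ^ m := by push_cast; ring
      _ ≤ (m + 1) * 4 ^ (m + 1) * μ.real (ball 0 1) * r ^ m := by gcongr
  have hbound := integral_inv_pow_le_of_measure_lt_le μ.toSphere (g := fun θ => ‖y - (θ : E)‖)
    (by fun_prop : Continuous _).measurable hxy0 (by positivity) hnearest m hlevel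
  rw [hm]
  push_cast
  convert hbound using 1
  ring

end SphereKernel

theorem sphere_kernel_integral_comparable_general
    (n : ℕ) (e : EuclideanSpace ℝ (Fin n)) (he : ‖e‖ = 1) :
    ∃ c C : ℝ, 0 < c ∧ 0 < C ∧
      ∀ ρ : ℝ, ρ ∈ Icc (1 / 2 : ℝ) 2 → ρ ≠ 1 →
        c / |1 - ρ| ≤
            (∫ θ, (‖ρ • e - (θ : EuclideanSpace ℝ (Fin n))‖ ^ n)⁻¹ ∂(sphereM n)) ∧
          (∫ θ, (‖ρ • e - (θ : EuclideanSpace ℝ (Fin n))‖ ^ n)⁻¹ ∂(sphereM n)) ≤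
            C / |1 - ρ| := by
  have hn : 0 < n := Nat.pos_of_ne_zero fun h => by subst h; simp [Subsingleton.elim e 0] at he
  have hB : 0 < volume.real (ball (0 : EuclideanSpace ℝ (Fin n)) 1) :=
    ENNReal.toReal_pos (measure_ball_pos _ _ one_pos).ne' measure_ball_lt_top.ne
  refine ⟨2 / 8 ^ n * volume.real (ball (0 : EuclideanSpace ℝ (Fin n)) 1),
    n ^ 2 * 4 ^ n * volume.real (ball (0 : EuclideanSpace ℝ (Fin n)) 1),
    by positivity, by positivity, fun ρ hρ hρ1 => ?_⟩
  set x : sphere (0 : EuclideanSpace ℝ (Fin n)) 1 := ⟨e, by simpa using he⟩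
  have hdist : ‖ρ • e - x‖ = |1 - ρ| := by
    rw [show ρ • e - x = (ρ - 1) • e by rw [sub_smul, one_smul], norm_smul, he, mul_one,
      Real.norm_eq_abs, abs_sub_comm]
  have hnearest : ∀ θ : sphere (0 : EuclideanSpace ℝ (Fin n)) 1, ‖ρ • e - x‖ ≤ ‖ρ • e - θ‖ := by
    intro θ
    have := abs_norm_sub_norm_le (ρ • e) (θ : EuclideanSpace ℝ (Fin n))
    rwa [norm_smul, he, mul_one, norm_eq_of_mem_sphere θ,
      Real.norm_of_nonneg (by linarith [hρ.1]), abs_sub_comm, ← hdist] at this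
  have hpos : 0 < ‖ρ • e - x‖ := hdist.trans_gt (abs_pos.2 (sub_ne_zero.2 hρ1.symm))
  have hle : ‖ρ • e - x‖ ≤ 2 := by
    rw [hdist, abs_le]
    constructor <;> linarith [hρ.1, hρ.2]
  have lower := integral_inv_norm_sub_pow_toSphere_ge volume x hpos hle hnearest
  have upper := integral_inv_norm_sub_pow_toSphere_le volume x hpos hnearest
  rw [finrank_euclideanSpace_fin, hdist] at lower upper
  exact ⟨lower, upper⟩

/-- Two-sided estimate `∫_{S^{n-1}} |ρe - θ|^{-n} dS(θ) ≃ |1-ρ|⁻¹` for `ρ ∈ [1/2,2]`, `ρ ≠ 1`. -/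
theorem sphere_kernel_integral_comparable
    (n : ℕ) (hn : 2 ≤ n) (e : EuclideanSpace ℝ (Fin n)) (he : ‖e‖ = 1) :
    ∃ c C : ℝ, 0 < c ∧ 0 < C ∧
      ∀ ρ : ℝ, ρ ∈ Icc (1 / 2 : ℝ) 2 → ρ ≠ 1 →
        c / |1 - ρ| ≤
            (∫ θ, (‖ρ • e - (θ : EuclideanSpace ℝ (Fin n))‖ ^ n)⁻¹ ∂(sphereM n)) ∧
          (∫ θ, (‖ρ • e - (θ : EuclideanSpace ℝ (Fin n))‖ ^ n)⁻¹ ∂(sphereM n)) ≤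
            C / |1 - ρ| :=
  sphere_kernel_integral_comparable_general n e he
end
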